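/- For any word ω ∈ {1,2,3,4}*, E(ω1, ω3) = E(ω2, ω4) = (31/126) E(ω), where E(ω) = ∫_{J_ω} ‖x − a(ω)‖² dP and E(ωi, ωj) = ∫_{J_{ωi}∪J_{ωj}} ‖x − a(ωi,ωj)‖² dP with a(ωi,ωj) the conditional expectation of X on J_{ωi}∪J_{ωj}. -/

import Mathlib

open MeasureTheory ProbabilityTheory
open scoped ENNReal

noncomputable section

abbrev E2 : Type := EuclideanSpace ℝ (Fin 2)

/-- The point (a,b) of the Euclidean plane. -/
def pt (a b : ℝ) : E2 := (WithLp.equiv 2 (Fin 2 → ℝ)).symm ![a, b]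

/-- The four generating similarities S₁,…,S₄ (indexed 0,…,3) of the Sierpiński carpet. -/
def S : Fin 4 → E2 → E2
  | 0 => fun x => pt (x 0 / 3) (x 1 / 3)
  | 1 => fun x => pt (x 0 / 3 + 2/3) (x 1 / 3)
  | 2 => fun x => pt (x 0 / 3) (x 1 / 3 + 2/3)
  | 3 => fun x => pt (x 0 / 3 + 2/3) (x 1 / 3 + 2/3)

/-- The self-affinity equation P = (1/8)P∘S₁⁻¹ + (1/8)P∘S₂⁻¹ + (3/8)P∘S₃⁻¹ + (3/8)P∘S₄⁻¹. -/
def carpetEq (P : Measure E2) : Prop :=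
  P = (1/8 : ℝ≥0∞) • P.map (S 0) + (1/8 : ℝ≥0∞) • P.map (S 1)
    + (3/8 : ℝ≥0∞) • P.map (S 2) + (3/8 : ℝ≥0∞) • P.map (S 3)

/-- The unit square [0,1]². -/
def unitSq : Set E2 := {x | ∀ i, x i ∈ Set.Icc (0:ℝ) 1}

/-- S_ω = S_{ω₁} ∘ ⋯ ∘ S_{ω_k} for a word ω. -/
def Sw (w : List (Fin 4)) : E2 → E2 := fun x => w.foldr S x

/-- The basic square J_ω = S_ω([0,1]²). -/
def Jw (w : List (Fin 4)) : Set E2 := Sw w '' unitSq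

/-- The basic square J_i of the first level. -/
def Jset (i : Fin 4) : Set E2 := S i '' unitSq

/-- The mass centroid (conditional expectation) of P on a set A. -/
def ctr (P : Measure E2) (A : Set E2) : E2 := (P A).toReal⁻¹ • ∫ x in A, x ∂P

/-- E(ω) : distortion error on J_ω about its centroid a(ω) = S_ω(1/2,3/4). -/
def Err (P : Measure E2) (w : List (Fin 4)) : ℝ :=
  ∫ x in Jw w, ‖x - Sw w (pt (1/2) (3/4))‖^2 ∂P

/-- E(ωi, ωj) : distortion error on J_{ωi} ∪ J_{ωj} about its centroid. -/
def Epair (P : Measure E2) (w : List (Fin 4)) (i j : Fin 4) : ℝ :=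
  ∫ x in (Jw (w ++ [i]) ∪ Jw (w ++ [j])),
    ‖x - ctr P (Jw (w ++ [i]) ∪ Jw (w ++ [j]))‖^2 ∂P

/-!
P is the invariant measure of the iterated function system (S, p). Since the maps are
contractions sending [0,1]² into pairwise disjoint subsquares, P is carried by [0,1]², and the
restriction of P to S_ω(B), for B ⊆ [0,1]², is p_ω times the image of P|_B under S_ω. Both
errors on level-|ω| cells are therefore the level-0 errors scaled by p_ω 9^{-|ω|}. At level 0,
the self-similarity equation determines the mean (1/2, 3/4) and the variance 7/32 of P, and the
parallel-axis formula ∫‖a x + v‖² dP = a² Var P + ‖a m + v‖² turns the errors of the columns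
J₁ ∪ J₃ and J₂ ∪ J₄ into 31/576 = (31/126)·(7/32).
-/

open Set Filter Topology Metric Function
open scoped NNReal

section SelfSimilar

variable {E ι : Type*} [MeasurableSpace E] [Fintype ι]

def IsSelfSimilar (μ : Measure E) (p : ι → ℝ≥0) (T : ι → E → E) : Prop :=
  μ = ∑ i, (p i : ℝ≥0∞) • μ.map (T i)

namespace IsSelfSimilar

variable {μ : Measure E} {p : ι → ℝ≥0} {T : ι → E → E}

theorem measure_eq (h : IsSelfSimilar μ p T) (hT : ∀ i, Measurable (T i)) {A : Set E}
    (hA : MeasurableSet A) : μ A = ∑ i, (p i : ℝ≥0∞) * μ (T i ⁻¹' A) := by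
  conv_lhs => rw [h]
  simp [Measure.map_apply (hT _) hA]

theorem measure_lt_le_measure_div_lt (h : IsSelfSimilar μ p T) (hT : ∀ i, Measurable (T i))
    (hp : ∑ i, p i = 1) {f : E → ℝ} (hf : Measurable f) {r : ℝ} (hr : 0 < r)
    (hfT : ∀ i x, f (T i x) ≤ r * f x) (t : ℝ) :
    μ {x | t < f x} ≤ μ {x | t / r < f x} := by
  rw [h.measure_eq hT (measurableSet_lt measurable_const hf)]
  calc ∑ i, (p i : ℝ≥0∞) * μ (T i ⁻¹' {x | t < f x})
      ≤ ∑ i, (p i : ℝ≥0∞) * μ {x | t / r < f x} := by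
        gcongr with i
        intro x (hx : t < f (T i x))
        show t / r < f x
        rw [div_lt_iff₀ hr]
        linarith [hfT i x]
    _ = μ {x | t / r < f x} := by
        rw [← Finset.sum_mul, ← ENNReal.ofNNReal_finsetSum, hp, ENNReal.coe_one, one_mul]

theorem measure_setOf_pos_eq_zero [IsFiniteMeasure μ] (h : IsSelfSimilar μ p T)
    (hT : ∀ i, Measurable (T i)) (hp : ∑ i, p i = 1) {f : E → ℝ} (hf : Measurable f) {r : ℝ}
    (hr₀ : 0 < r) (hr₁ : r < 1) (hfT : ∀ i x, f (T i x) ≤ r * f x) :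
    μ {x | 0 < f x} = 0 := by
  have htail : Tendsto (fun t : ℝ => μ {x | t < f x}) atTop (𝓝 0) := by
    have hlim := tendsto_measure_iInter_atTop (μ := μ) (s := fun t : ℝ => {x | t < f x})
      (fun t => (measurableSet_lt measurable_const hf).nullMeasurableSet)
      (fun s t hst x hx => lt_of_le_of_lt hst hx) ⟨0, measure_ne_top _ _⟩
    rwa [iInter_eq_empty_iff.mpr fun x => ⟨f x, (lt_irrefl (f x) : ¬ f x < f x)⟩,
      measure_empty] at hlim
  have hsmall : ∀ t > 0, μ {x | t < f x} = 0 := by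
    intro t ht
    have hgrow : Tendsto (fun n : ℕ => t / r ^ n) atTop atTop := by
      simp_rw [div_eq_mul_inv, ← inv_pow]
      exact (tendsto_pow_atTop_atTop_of_one_lt
        (one_lt_inv_iff₀.mpr ⟨hr₀, hr₁⟩)).const_mul_atTop ht
    refine le_antisymm (ge_of_tendsto' (htail.comp hgrow) fun n => ?_) bot_le
    induction n with
    | zero => simp
    | succ n ih =>
      refine ih.trans ((h.measure_lt_le_measure_div_lt hT hp hf hr₀ hfT _).trans_eq ?_)
      simp [pow_succ, div_div]
  have hcover : {x | 0 < f x} ⊆ ⋃ n : ℕ, {x | 1 / (n + 1 : ℝ) < f x} :=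
    fun x (hx : 0 < f x) => by simpa using exists_nat_one_div_lt hx
  exact measure_mono_null hcover (measure_iUnion_null fun n => hsmall _ Nat.one_div_pos_of_nat)

theorem ae_mem [PseudoMetricSpace E] [BorelSpace E] [IsFiniteMeasure μ]
    (h : IsSelfSimilar μ p T) (hp : ∑ i, p i = 1) {r : ℝ≥0} (hr₀ : 0 < r) (hr₁ : r < 1)
    (hT : ∀ i, LipschitzWith r (T i)) {K : Set E} (hK : IsClosed K) (hKne : K.Nonempty)
    (hTK : ∀ i, MapsTo (T i) K K) : ∀ᵐ x ∂μ, x ∈ K := by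
  have hdist : ∀ i x, infDist (T i x) K ≤ r * infDist x K := by
    intro i x
    rw [← div_le_iff₀' (NNReal.coe_pos.mpr hr₀), le_infDist hKne]
    intro y hy
    rw [div_le_iff₀' (NNReal.coe_pos.mpr hr₀)]
    exact (infDist_le_dist_of_mem (hTK i hy)).trans ((hT i).dist_le_mul x y)
  have hnull := h.measure_setOf_pos_eq_zero (fun i => (hT i).continuous.measurable) hp
    (continuous_infDist_pt K).measurable hr₀ hr₁ hdist
  simp_rw [← hK.notMem_iff_infDist_pos hKne] at hnull
  exact measure_eq_zero_iff_ae_notMem.mp hnull |>.mono fun x hx => not_not.mp hx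

theorem restrict_image (h : IsSelfSimilar μ p T) (hT : ∀ i, MeasurableEmbedding (T i))
    {K : Set E} (hK : ∀ᵐ x ∂μ, x ∈ K) (hdisj : Pairwise (Disjoint on fun i => T i '' K))
    (i : ι) {B : Set E} (hB : B ⊆ K) :
    μ.restrict (T i '' B) = (p i : ℝ≥0∞) • (μ.restrict B).map (T i) := by
  have hpre : ∀ j, j ≠ i → μ (T j ⁻¹' (T i '' B)) = 0 := by
    intro j hj
    refine measure_mono_null ?_ (ae_iff.mp hK)
    rintro x ⟨y, hyB, hy⟩ (hxK : x ∈ K)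
    exact disjoint_left.mp (hdisj hj) ⟨x, hxK, rfl⟩ ⟨y, hB hyB, hy⟩
  conv_lhs => rw [h]
  rw [← Measure.restrictₗ_apply, map_sum, Finset.sum_eq_single i]
  · rw [LinearMap.map_smul, Measure.restrictₗ_apply, (hT i).restrict_map,
      preimage_image_eq _ (hT i).injective]
  · intro j _ hj
    rw [LinearMap.map_smul, Measure.restrictₗ_apply, (hT j).restrict_map,
      Measure.restrict_eq_zero.mpr (hpre j hj), Measure.map_zero, smul_zero]
  · simp

theorem integral_eq {G : Type*} [NormedAddCommGroup G] [NormedSpace ℝ G]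
    (h : IsSelfSimilar μ p T) (hT : ∀ i, MeasurableEmbedding (T i)) {g : E → G}
    (hg : ∀ i, Integrable (fun x => g (T i x)) μ) :
    ∫ x, g x ∂μ = ∑ i, (p i : ℝ) • ∫ x, g (T i x) ∂μ := by
  conv_lhs => rw [h]
  rw [integral_finsetSum_measure fun i _ =>
    ((hT i).integrable_map_iff.mpr (hg i)).smul_measure ENNReal.coe_ne_top]
  simp_rw [integral_smul_measure, (hT _).integral_map, ENNReal.coe_toReal]

end IsSelfSimilar

end SelfSimilar

theorem integral_smul_add {F : Type*} [NormedAddCommGroup F] [NormedSpace ℝ F]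
    [CompleteSpace F] [MeasurableSpace F] {μ : Measure F} [IsProbabilityMeasure μ]
    (hμ : Integrable id μ) (a : ℝ) (v : F) : ∫ x, (a • x + v) ∂μ = a • ∫ x, x ∂μ + v := by
  rw [integral_add (f := fun x => a • x) (hμ.smul a) (integrable_const v), integral_smul,
    integral_const, probReal_univ, one_smul]

section SecondMoment

variable {F : Type*} [NormedAddCommGroup F] [InnerProductSpace ℝ F] [CompleteSpace F]
  [MeasurableSpace F] {μ : Measure F} [IsProbabilityMeasure μ]

theorem integral_norm_smul_add_sq (hμ : MemLp id 2 μ) (a : ℝ) (v : F) :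
    ∫ x, ‖a • x + v‖ ^ 2 ∂μ =
      a ^ 2 * ∫ x, ‖x - ∫ y, y ∂μ‖ ^ 2 ∂μ + ‖a • ∫ y, y ∂μ + v‖ ^ 2 := by
  set m := ∫ y, y ∂μ
  set w := a • m + v
  have hid : Integrable (fun x => x) μ := hμ.integrable one_le_two
  have hint : Integrable (fun x => x - m) μ := hid.sub (integrable_const m)
  have hsq : Integrable (fun x => ‖x - m‖ ^ 2) μ :=
    (hμ.sub (memLp_const m)).integrable_norm_pow two_ne_zero
  have hexpand : (fun x => ‖a • x + v‖ ^ 2) =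
      fun x => a ^ 2 * ‖x - m‖ ^ 2 + (2 * a * inner ℝ w (x - m) + ‖w‖ ^ 2) := by
    ext x
    rw [show a • x + v = a • (x - m) + w by module, norm_add_sq_real, norm_smul,
      real_inner_smul_left, real_inner_comm, mul_pow, Real.norm_eq_abs, sq_abs]
    ring
  have hcentered : ∫ x, inner ℝ w (x - m) ∂μ = 0 := by
    rw [integral_inner hint, integral_sub hid (integrable_const m),
      integral_const, probReal_univ, one_smul, sub_self, inner_zero_right]
  have hlin : Integrable (fun x => 2 * a * inner ℝ w (x - m)) μ :=
    (hint.const_inner w).const_mul _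
  have hrest : Integrable (fun x => 2 * a * inner ℝ w (x - m) + ‖w‖ ^ 2) μ :=
    hlin.add (integrable_const _)
  rw [hexpand, integral_add (hsq.const_mul _) hrest,
    integral_add hlin (integrable_const _), integral_const_mul, integral_const_mul, hcentered,
    integral_const, probReal_univ, one_smul, mul_zero, zero_add]

end SecondMoment

section Carpet

@[simp] lemma pt_apply_zero (a b : ℝ) : pt a b 0 = a := rfl
@[simp] lemma pt_apply_one (a b : ℝ) : pt a b 1 = b := rfl

lemma E2_ext {x y : E2} (h0 : x 0 = y 0) (h1 : x 1 = y 1) : x = y := by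
  ext i; fin_cases i <;> assumption

lemma eq_pt (x : E2) : x = pt (x 0) (x 1) := E2_ext rfl rfl

@[simp] lemma pt_inj {a b c d : ℝ} : pt a b = pt c d ↔ a = c ∧ b = d :=
  ⟨fun h => ⟨congrArg (· 0) h, congrArg (· 1) h⟩, fun ⟨h0, h1⟩ => h0 ▸ h1 ▸ rfl⟩

@[simp] lemma pt_add_pt (a b c d : ℝ) : pt a b + pt c d = pt (a + c) (b + d) := E2_ext rfl rfl
@[simp] lemma pt_sub_pt (a b c d : ℝ) : pt a b - pt c d = pt (a - c) (b - d) := E2_ext rfl rfl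
@[simp] lemma smul_pt (r a b : ℝ) : r • pt a b = pt (r * a) (r * b) := E2_ext rfl rfl

lemma norm_pt_sq (a b : ℝ) : ‖pt a b‖ ^ 2 = a ^ 2 + b ^ 2 := by
  rw [EuclideanSpace.norm_eq, Real.sq_sqrt (by positivity), Fin.sum_univ_two]
  simp

lemma S_apply (i : Fin 4) (x : E2) : S i x = (3 : ℝ)⁻¹ • x + S i 0 := by
  rw [eq_pt x]
  fin_cases i <;> simp [S] <;> constructor <;> ring

lemma isCompact_unitSq : IsCompact unitSq := by
  have : unitSq = EuclideanSpace.equiv (Fin 2) ℝ ⁻¹' univ.pi fun _ => Icc 0 1 := by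
    ext x; simp only [mem_preimage, mem_univ_pi]; rfl
  rw [this]
  exact (EuclideanSpace.equiv (Fin 2) ℝ).toHomeomorph.isCompact_preimage.mpr
    (isCompact_univ_pi fun _ => isCompact_Icc)

lemma measurableSet_unitSq : MeasurableSet unitSq :=
  isCompact_unitSq.isClosed.measurableSet

lemma mapsTo_S_unitSq (i : Fin 4) : MapsTo (S i) unitSq unitSq := by
  intro x hx k
  have := hx 0; have := hx 1
  fin_cases i <;> fin_cases k <;> simp_all [S] <;> constructor <;> linarith

lemma lipschitzWith_S (i : Fin 4) : LipschitzWith 3⁻¹ (S i) :=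
  LipschitzWith.of_dist_le_mul fun x y => by
    rw [dist_eq_norm, dist_eq_norm, S_apply i x, S_apply i y, add_sub_add_right_eq_sub, ← smul_sub,
      norm_smul]
    simp

@[fun_prop] lemma continuous_S (i : Fin 4) : Continuous (S i) := (lipschitzWith_S i).continuous

lemma measurableEmbedding_S (i : Fin 4) : MeasurableEmbedding (S i) := by
  convert ((Homeomorph.smulOfNeZero (3⁻¹ : ℝ) (by norm_num)).trans
    (Homeomorph.addRight (S i 0))).measurableEmbedding
  exact funext (S_apply i)

lemma pairwise_disjoint_Jset : Pairwise (Disjoint on Jset) := by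
  rintro i j hij
  rw [onFun, disjoint_left]
  rintro _ ⟨x, hx, rfl⟩ ⟨y, hy, hxy⟩
  have := hx 0; have := hx 1; have := hy 0; have := hy 1
  fin_cases i <;> fin_cases j <;> simp_all [S] <;> linarith

lemma measurableSet_Jset (i : Fin 4) : MeasurableSet (Jset i) :=
  (measurableEmbedding_S i).measurableSet_image' measurableSet_unitSq

def pr : Fin 4 → ℝ≥0
  | 0 => 1/8
  | 1 => 1/8
  | 2 => 3/8
  | 3 => 3/8

lemma pr_pos (i : Fin 4) : 0 < pr i := by
  fin_cases i <;> norm_num [pr]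

lemma sum_pr : ∑ i, pr i = 1 := by
  rw [Fin.sum_univ_four]
  norm_num [pr]

lemma carpetEq.isSelfSimilar {P : Measure E2} (hP : carpetEq P) : IsSelfSimilar P pr S := by
  rw [IsSelfSimilar, Fin.sum_univ_four]
  conv_lhs => rw [hP]
  simp [pr]

end Carpet

section CarpetMeasure

variable {P : Measure E2} [IsProbabilityMeasure P]

lemma ae_mem_unitSq (hP : carpetEq P) : ∀ᵐ x ∂P, x ∈ unitSq :=
  hP.isSelfSimilar.ae_mem sum_pr (by norm_num) (by norm_num) lipschitzWith_S
    isCompact_unitSq.isClosed ⟨pt 0 0, by simp [unitSq]⟩ mapsTo_S_unitSq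

lemma restrict_unitSq (hP : carpetEq P) : P.restrict unitSq = P :=
  Measure.restrict_eq_self_of_ae_mem (ae_mem_unitSq hP)

lemma integrable_of_continuous (hP : carpetEq P) {G : Type*} [NormedAddCommGroup G]
    {g : E2 → G} (hg : Continuous g) : Integrable g P := by
  rw [← restrict_unitSq hP]
  exact hg.continuousOn.integrableOn_compact isCompact_unitSq

lemma memLp_id (hP : carpetEq P) : MemLp id 2 P :=
  (memLp_two_iff_integrable_sq_norm aestronglyMeasurable_id).mpr
    (integrable_of_continuous hP (by fun_prop))

lemma restrict_Jset (hP : carpetEq P) (i : Fin 4) :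
    P.restrict (Jset i) = (pr i : ℝ≥0∞) • P.map (S i) := by
  rw [Jset, hP.isSelfSimilar.restrict_image measurableEmbedding_S (ae_mem_unitSq hP)
    pairwise_disjoint_Jset i subset_rfl, restrict_unitSq hP]

lemma integral_S (hP : carpetEq P) (i : Fin 4) : ∫ x, S i x ∂P = S i (∫ x, x ∂P) := by
  rw [funext (S_apply i), integral_smul_add ((memLp_id hP).integrable one_le_two), S_apply]

lemma integral_id_eq (hP : carpetEq P) : ∫ x, x ∂P = pt (1/2) (3/4) := by
  have h := hP.isSelfSimilar.integral_eq measurableEmbedding_S (g := id)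
    fun i => integrable_of_continuous hP (continuous_S i)
  simp only [id, integral_S hP] at h
  obtain ⟨a, b, hab⟩ : ∃ a b, ∫ x, x ∂P = pt a b := ⟨_, _, eq_pt _⟩
  rw [hab] at h ⊢
  simp only [Fin.sum_univ_four, S, pr, pt_apply_zero, pt_apply_one, smul_pt, pt_add_pt,
    pt_inj] at h
  push_cast at h
  rw [pt_inj]
  constructor <;> linarith [h.1, h.2]

lemma integral_norm_S_sub_sq (hP : carpetEq P) (i : Fin 4) (c : E2) :
    ∫ x, ‖S i x - c‖ ^ 2 ∂P =
      9⁻¹ * ∫ x, ‖x - pt (1/2) (3/4)‖ ^ 2 ∂P + ‖S i (pt (1/2) (3/4)) - c‖ ^ 2 := by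
  have hS : (fun x => ‖S i x - c‖ ^ 2) = fun x => ‖(3 : ℝ)⁻¹ • x + (S i 0 - c)‖ ^ 2 :=
    funext fun x => by rw [S_apply i x, add_sub_assoc]
  rw [hS, integral_norm_smul_add_sq (memLp_id hP), integral_id_eq hP, S_apply i (pt _ _),
    add_sub_assoc]
  norm_num

lemma integral_norm_sub_sq_mean (hP : carpetEq P) :
    ∫ x, ‖x - pt (1/2) (3/4)‖ ^ 2 ∂P = 7/32 := by
  have h := hP.isSelfSimilar.integral_eq measurableEmbedding_S
    (g := fun x => ‖x - pt (1/2) (3/4)‖ ^ 2)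
    fun i => integrable_of_continuous hP (by fun_prop)
  simp only [integral_norm_S_sub_sq hP] at h
  simp only [Fin.sum_univ_four, S, pr, pt_apply_zero, pt_apply_one, pt_sub_pt, norm_pt_sq,
    smul_eq_mul] at h
  push_cast at h
  linarith

lemma restrict_Jset_union (hP : carpetEq P) {i j : Fin 4} (hij : i ≠ j) :
    P.restrict (Jset i ∪ Jset j) = (pr i : ℝ≥0∞) • P.map (S i) + (pr j : ℝ≥0∞) • P.map (S j) := by
  rw [Measure.restrict_union (pairwise_disjoint_Jset hij) (measurableSet_Jset j),
    restrict_Jset hP, restrict_Jset hP]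

lemma measure_Jset_union (hP : carpetEq P) {i j : Fin 4} (hij : i ≠ j) :
    P (Jset i ∪ Jset j) = pr i + pr j := by
  rw [← Measure.restrict_apply_univ, restrict_Jset_union hP hij]
  simp [Measure.map_apply (continuous_S _).measurable MeasurableSet.univ]

lemma setIntegral_Jset_union (hP : carpetEq P) {i j : Fin 4} (hij : i ≠ j) {G : Type*}
    [NormedAddCommGroup G] [NormedSpace ℝ G] {g : E2 → G} (hg : Continuous g) :
    ∫ x in Jset i ∪ Jset j, g x ∂P =
      (pr i : ℝ) • ∫ x, g (S i x) ∂P + (pr j : ℝ) • ∫ x, g (S j x) ∂P := by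
  have hint : ∀ k, Integrable g ((pr k : ℝ≥0∞) • P.map (S k)) := fun k =>
    ((measurableEmbedding_S k).integrable_map_iff.mpr (integrable_of_continuous hP
      (hg.comp (continuous_S k)))).smul_measure ENNReal.coe_ne_top
  rw [restrict_Jset_union hP hij, integral_add_measure (hint i) (hint j), integral_smul_measure,
    integral_smul_measure, (measurableEmbedding_S i).integral_map,
    (measurableEmbedding_S j).integral_map, ENNReal.coe_toReal, ENNReal.coe_toReal]

lemma ctr_Jset_union (hP : carpetEq P) {i j : Fin 4} (hij : i ≠ j) :
    ctr P (Jset i ∪ Jset j) = ((pr i : ℝ) + pr j)⁻¹ •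
      ((pr i : ℝ) • S i (pt (1/2) (3/4)) + (pr j : ℝ) • S j (pt (1/2) (3/4))) := by
  rw [ctr, measure_Jset_union hP hij, setIntegral_Jset_union hP hij (g := fun x => x) continuous_id,
    integral_S hP, integral_S hP, integral_id_eq hP, ← ENNReal.coe_add, ENNReal.coe_toReal,
    NNReal.coe_add]

lemma Epair_nil_of_column (hP : carpetEq P) {i j : Fin 4} (h : i = 0 ∧ j = 2 ∨ i = 1 ∧ j = 3) :
    Epair P [] i j = 31/576 := by
  have hij : i ≠ j := by rcases h with ⟨rfl, rfl⟩ | ⟨rfl, rfl⟩ <;> decide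
  change ∫ x in Jset i ∪ Jset j, ‖x - ctr P (Jset i ∪ Jset j)‖ ^ 2 ∂P = _
  rw [ctr_Jset_union hP hij, setIntegral_Jset_union hP hij (by fun_prop),
    integral_norm_S_sub_sq hP, integral_norm_S_sub_sq hP, integral_norm_sub_sq_mean hP]
  rcases h with ⟨rfl, rfl⟩ | ⟨rfl, rfl⟩ <;>
    simp only [S, pr, pt_apply_zero, pt_apply_one, smul_pt, pt_add_pt, pt_sub_pt, norm_pt_sq,
      smul_eq_mul] <;> push_cast <;> norm_num

end CarpetMeasure

section Words

lemma Sw_cons (a : Fin 4) (w : List (Fin 4)) : Sw (a :: w) = S a ∘ Sw w := rfl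

lemma Sw_append_singleton (w : List (Fin 4)) (i : Fin 4) : Sw (w ++ [i]) = Sw w ∘ S i := by
  funext x
  simp [Sw, List.foldr_append]

lemma Sw_apply (w : List (Fin 4)) (x : E2) : Sw w x = ((3 : ℝ)⁻¹ ^ w.length) • x + Sw w 0 := by
  induction w generalizing x with
  | nil => simp [Sw]
  | cons a w ih =>
    rw [Sw_cons, comp_apply, comp_apply, ih x, S_apply a (_ + _), S_apply a (Sw w 0),
      List.length_cons, pow_succ]
    module

lemma Sw_sub_Sw (w : List (Fin 4)) (x y : E2) :
    Sw w x - Sw w y = ((3 : ℝ)⁻¹ ^ w.length) • (x - y) := by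
  rw [Sw_apply w x, Sw_apply w y, add_sub_add_right_eq_sub, smul_sub]

lemma measurableEmbedding_Sw (w : List (Fin 4)) : MeasurableEmbedding (Sw w) := by
  induction w with
  | nil => exact MeasurableEmbedding.id
  | cons a w ih => exact (measurableEmbedding_S a).comp ih

lemma mapsTo_Sw_unitSq (w : List (Fin 4)) : MapsTo (Sw w) unitSq unitSq := by
  induction w with
  | nil => exact mapsTo_id _
  | cons a w ih => exact (mapsTo_S_unitSq a).comp ih

def wordWeight (w : List (Fin 4)) : ℝ≥0 := (w.map pr).prod

lemma wordWeight_pos (w : List (Fin 4)) : 0 < wordWeight w := by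
  refine List.prod_pos fun c hc => ?_
  obtain ⟨i, -, rfl⟩ := List.mem_map.mp hc
  exact pr_pos i

end Words

section WordMeasure

variable {P : Measure E2} [IsProbabilityMeasure P]

lemma restrict_image_Sw (hP : carpetEq P) (w : List (Fin 4)) {B : Set E2} (hB : B ⊆ unitSq) :
    P.restrict (Sw w '' B) = (wordWeight w : ℝ≥0∞) • (P.restrict B).map (Sw w) := by
  induction w with
  | nil => simp [wordWeight, show Sw [] = id from rfl]
  | cons a w ih =>
    rw [Sw_cons, image_comp, hP.isSelfSimilar.restrict_image measurableEmbedding_S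
      (ae_mem_unitSq hP) pairwise_disjoint_Jset a
      ((image_mono hB).trans (mapsTo_Sw_unitSq w).image_subset), ih, Measure.map_smul,
      Measure.map_map (continuous_S a).measurable (measurableEmbedding_Sw w).measurable,
      smul_smul, ← ENNReal.coe_mul]
    simp [wordWeight]

lemma measure_image_Sw (hP : carpetEq P) (w : List (Fin 4)) {B : Set E2} (hB : B ⊆ unitSq) :
    P (Sw w '' B) = wordWeight w * P B := by
  rw [← Measure.restrict_apply_univ, restrict_image_Sw hP w hB, Measure.smul_apply,
    (measurableEmbedding_Sw w).map_apply, preimage_univ, Measure.restrict_apply_univ,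
    smul_eq_mul]

lemma setIntegral_image_Sw (hP : carpetEq P) (w : List (Fin 4)) {B : Set E2}
    (hB : B ⊆ unitSq) {G : Type*} [NormedAddCommGroup G] [NormedSpace ℝ G] (g : E2 → G) :
    ∫ x in Sw w '' B, g x ∂P = (wordWeight w : ℝ) • ∫ x in B, g (Sw w x) ∂P := by
  rw [restrict_image_Sw hP w hB, integral_smul_measure, (measurableEmbedding_Sw w).integral_map,
    ENNReal.coe_toReal]

lemma ctr_image_Sw (hP : carpetEq P) (w : List (Fin 4)) {B : Set E2} (hB : B ⊆ unitSq)
    (hB₀ : P B ≠ 0) : ctr P (Sw w '' B) = Sw w (ctr P B) := by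
  set ρ : ℝ := (3 : ℝ)⁻¹ ^ w.length
  have hI : ∫ x in B, Sw w x ∂P = ρ • ∫ x in B, x ∂P + P.real B • Sw w 0 := by
    have hint : Integrable (fun x : E2 => ρ • x) (P.restrict B) :=
      (integrable_of_continuous hP continuous_id).restrict.smul ρ
    rw [show (fun x => Sw w x) = fun x => ρ • x + Sw w 0 from funext (Sw_apply w),
      integral_add hint (integrable_const _), integral_smul, integral_const,
      measureReal_restrict_apply_univ]
  have hw : (wordWeight w : ℝ) ≠ 0 := (NNReal.coe_pos.mpr (wordWeight_pos w)).ne'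
  have hB' : P.real B ≠ 0 := (ENNReal.toReal_pos hB₀ (measure_ne_top P B)).ne'
  rw [ctr, ctr, measure_image_Sw hP w hB, setIntegral_image_Sw hP w hB, hI, ENNReal.toReal_mul,
    ENNReal.coe_toReal, ← measureReal_def, Sw_apply w (_ • _), smul_smul, mul_inv_rev, mul_assoc,
    inv_mul_cancel₀ hw, mul_one, smul_add, smul_smul _ (P.real B), inv_mul_cancel₀ hB', one_smul,
    smul_comm]

lemma setIntegral_image_Sw_norm_sub_sq (hP : carpetEq P) (w : List (Fin 4)) {B : Set E2}
    (hB : B ⊆ unitSq) (c : E2) :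
    ∫ x in Sw w '' B, ‖x - Sw w c‖ ^ 2 ∂P =
      wordWeight w * ((3 : ℝ)⁻¹ ^ w.length) ^ 2 * ∫ x in B, ‖x - c‖ ^ 2 ∂P := by
  simp_rw [setIntegral_image_Sw hP w hB, Sw_sub_Sw, norm_smul, mul_pow, Real.norm_eq_abs, sq_abs,
    integral_const_mul, smul_eq_mul, mul_assoc]

lemma Err_eq (hP : carpetEq P) (w : List (Fin 4)) :
    Err P w = wordWeight w * ((3 : ℝ)⁻¹ ^ w.length) ^ 2 * (7/32) := by
  rw [Err, Jw, setIntegral_image_Sw_norm_sub_sq hP w subset_rfl, restrict_unitSq hP,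
    integral_norm_sub_sq_mean hP]

lemma Epair_eq (hP : carpetEq P) (w : List (Fin 4)) {i j : Fin 4} (hij : i ≠ j) :
    Epair P w i j = wordWeight w * ((3 : ℝ)⁻¹ ^ w.length) ^ 2 * Epair P [] i j := by
  have hU : Jw (w ++ [i]) ∪ Jw (w ++ [j]) = Sw w '' (Jset i ∪ Jset j) := by
    rw [Jw, Jw, Sw_append_singleton, Sw_append_singleton, image_comp, image_comp, image_union]
    rfl
  have hsub : Jset i ∪ Jset j ⊆ unitSq :=
    union_subset (mapsTo_S_unitSq i).image_subset (mapsTo_S_unitSq j).image_subset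
  have hpos : P (Jset i ∪ Jset j) ≠ 0 := by
    rw [measure_Jset_union hP hij]
    exact_mod_cast (add_pos (pr_pos i) (pr_pos j)).ne'
  rw [Epair, hU, ctr_image_Sw hP w hsub hpos, setIntegral_image_Sw_norm_sub_sq hP w hsub]
  rfl

end WordMeasure

theorem Epair_13_24 (P : Measure E2) [IsProbabilityMeasure P] (hP : carpetEq P)
    (w : List (Fin 4)) :
    Epair P w 0 2 = (31/126) * Err P w ∧ Epair P w 1 3 = (31/126) * Err P w := by
  constructor <;>
    rw [Epair_eq hP w (by decide), Epair_nil_of_column hP (by decide), Err_eq hP w] <;> ring
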